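/- For all spanoids S₁ on a finite set X₁ and S₂ on a finite set X₂: rank(S₁ ⋉ S₂) = rank(S₁) · rank(S₂), where ⋉ denotes the semi-direct product of spanoids. -/

import Mathlib

open scoped BigOperators

/-- A spanoid on ground set `X`: a set of inference rules `(A, i)`,
read as "`A` spans `i`". -/
abbrev SpanoidOn (X : Type) : Type := Set (Set X × X)

/-- The span of `T`: the smallest superset `T'` of `T` such that whenever `(A, i)` is a
rule with `A ⊆ T'`, also `i ∈ T'`. -/
def sSpan {X : Type} (S : SpanoidOn X) (T : Set X) : Set X :=
  ⋂₀ {T' : Set X | T ⊆ T' ∧ ∀ p ∈ S, p.1 ⊆ T' → p.2 ∈ T'}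

/-- The rank of a spanoid: the minimum size of a subset spanning the whole ground set. -/
noncomputable def sRank {X : Type} [Fintype X] (S : SpanoidOn X) : ℕ :=
  sInf {k : ℕ | ∃ T : Set X, T.ncard = k ∧ sSpan S T = Set.univ}

/-- A set is closed if it equals its own span. -/
def sClosed {X : Type} (S : SpanoidOn X) (B : Set X) : Prop := sSpan S B = B

/-- A set is open if its complement is closed. -/
def sOpen {X : Type} (S : SpanoidOn X) (B : Set X) : Prop := sClosed S Bᶜ

/-- A code `C ⊆ K^X` is consistent with the spanoid `S` if for every rule `(A, i)` of `S`
there is a function `g` with `c i = g (c|_A)` for all codewords `c ∈ C`. -/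
def sConsistent {X K : Type} (S : SpanoidOn X) (C : Set (X → K)) : Prop :=
  ∀ p ∈ S, ∃ g : (↥p.1 → K) → K, ∀ c ∈ C, c p.2 = g (fun a => c a.1)

/-- The functional rank of a spanoid: the supremum of `log |C| / log |Σ|` over all finite
alphabets `Σ` (of size at least 2) and all codes `C ⊆ Σ^X` consistent with `S`. -/
noncomputable def sFrank {X : Type} (S : SpanoidOn X) : ℝ :=
  sSup {d : ℝ | ∃ m : ℕ, 2 ≤ m ∧ ∃ C : Set (X → Fin m),
    sConsistent S C ∧ d = Real.log (Nat.card C) / Real.log m}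

/-- Feasibility for the entropy linear program of a spanoid. -/
def sEntFeasible {X : Type} (S : SpanoidOn X) (f : Set X → ℝ) : Prop :=
  f ∅ = 0 ∧ (∀ i : X, f {i} ≤ 1) ∧
  (∀ A B : Set X, f (A ∪ B) + f (A ∩ B) ≤ f A + f B) ∧
  (∀ A B : Set X, A ⊆ B → f A ≤ f B) ∧
  (∀ A : Set X, ∀ i ∈ sSpan S A, f (A ∪ {i}) = f A)

/-- The optimum of the entropy linear program: maximize `f(X)` over feasible `f`. -/
noncomputable def sLPentropy {X : Type} (S : SpanoidOn X) : ℝ :=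
  sSup {y : ℝ | ∃ f : Set X → ℝ, sEntFeasible S f ∧ y = f Set.univ}

/-- The optimum of the covering linear program: minimize `∑ i, x i` over `x ≥ 0` such that
`∑_{i ∈ B} x i ≥ 1` for every nonempty open set `B`. -/
noncomputable def sLPcover {X : Type} [Fintype X] (S : SpanoidOn X) : ℝ :=
  sInf {y : ℝ | ∃ x : X → ℝ, (∀ i, 0 ≤ x i) ∧
    (∀ B : Set X, B.Nonempty → sOpen S B → 1 ≤ ∑ i, B.indicator x i) ∧
    y = ∑ i, x i}

/-- A spanoid on `[n]` is a `q`-LCS with error-tolerance `δ` if every `i` is spanned by at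
least `δ n` pairwise disjoint `q`-element subsets. -/
def sIsLCS {n : ℕ} (q : ℕ) (δ : ℝ) (S : SpanoidOn (Fin n)) : Prop :=
  ∀ i : Fin n, ∃ M : Finset (Finset (Fin n)),
    δ * n ≤ (M.card : ℝ) ∧
    (∀ A ∈ M, A.card = q) ∧
    ((M : Set (Finset (Fin n))).Pairwise fun A B => Disjoint A B) ∧
    ∀ A ∈ M, ((A : Set (Fin n)), i) ∈ S

/-- The semi-direct product `S₁ ⋉ S₂` on `X₁ × X₂`: whenever `A ⊨ i` in `S₁` and `j ∈ X₂`,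
the rule `(A × X₂, (i,j))`; and whenever `B ⊨ j` in `S₂` and `i ∈ X₁`, the rule
`({i} × B, (i,j))`. -/
def semidirect {X₁ X₂ : Type} (S₁ : SpanoidOn X₁) (S₂ : SpanoidOn X₂) :
    SpanoidOn (X₁ × X₂) :=
  {p | (∃ (A : Set X₁) (i : X₁) (j : X₂), i ∈ sSpan S₁ A ∧
          p = (A ×ˢ (Set.univ : Set X₂), (i, j))) ∨
       (∃ (B : Set X₂) (i : X₁) (j : X₂), j ∈ sSpan S₂ B ∧
          p = (({i} : Set X₁) ×ˢ B, (i, j)))}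


/-!
If `T₁` spans `S₁` and `T₂` spans `S₂`, then `T₁ × T₂` spans `S₁ ⋉ S₂`: rules of the second kind
fill the rows `{i} × X₂` with `i ∈ T₁`, and rules of the first kind then propagate full rows
along `span T₁ = X₁`.

Conversely, let `T` span `S₁ ⋉ S₂` and let `V` be the set of rows `i` whose fiber `Tᵢ` spans `S₂`.
The set of pairs `(i, j)` with `i ∈ span V` or `j ∈ span Tᵢ` contains `T` and is closed under
both kinds of rules, so it is everything; hence every row lies in `span V`, i.e. `V` spans `S₁`.
Each row in `V` contains at least `rank S₂` points of `T`, so `|T| ≥ rank S₁ · rank S₂`.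
-/

section Span

variable {X : Type} (S : SpanoidOn X)

lemma subset_sSpan (T : Set X) : T ⊆ sSpan S T :=
  fun _ hx => Set.mem_sInter.2 fun _ hT' => hT'.1 hx

lemma sSpan_subset_of_rule_closed {T C : Set X} (hTC : T ⊆ C)
    (hC : ∀ p ∈ S, p.1 ⊆ C → p.2 ∈ C) : sSpan S T ⊆ C :=
  Set.sInter_subset_of_mem ⟨hTC, hC⟩

lemma mem_sSpan_of_rule {T : Set X} {p : Set X × X} (hp : p ∈ S)
    (h : p.1 ⊆ sSpan S T) : p.2 ∈ sSpan S T :=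
  Set.mem_sInter.2 fun _ hT' => hT'.2 p hp (h.trans (Set.sInter_subset_of_mem hT'))

variable {S} in
lemma sSpan_subset_sSpan {A T : Set X} (h : A ⊆ sSpan S T) : sSpan S A ⊆ sSpan S T :=
  sSpan_subset_of_rule_closed S h fun _ hp => mem_sSpan_of_rule S hp

lemma sRank_le_ncard [Fintype X] {T : Set X} (h : sSpan S T = Set.univ) :
    sRank S ≤ T.ncard :=
  Nat.sInf_le ⟨T, rfl, h⟩

lemma exists_ncard_eq_sRank [Fintype X] :
    ∃ T : Set X, T.ncard = sRank S ∧ sSpan S T = Set.univ :=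
  Nat.sInf_mem (s := {k | ∃ T : Set X, T.ncard = k ∧ sSpan S T = Set.univ})
    ⟨_, Set.univ, rfl, Set.eq_univ_of_univ_subset (subset_sSpan S _)⟩

end Span

lemma ncard_mul_le_ncard_of_le_ncard_preimage_mk {α β : Type} [Finite α] [Finite β]
    {T : Set (α × β)} {V : Set α} {r : ℕ} (h : ∀ i ∈ V, r ≤ (Prod.mk i ⁻¹' T).ncard) :
    V.ncard * r ≤ T.ncard := by
  classical
  have := Fintype.ofFinite α
  have := Fintype.ofFinite β
  have fiber (i : α) : (Prod.mk i ⁻¹' T).ncard = (T.toFinset.filter (·.1 = i)).card := by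
    rw [← Set.ncard_image_of_injective _ (Prod.mk_right_injective i), ← Set.ncard_coe_finset]
    congr 1
    ext ⟨a, b⟩
    aesop
  rw [Set.ncard_eq_toFinset_card' V, Set.ncard_eq_toFinset_card' T,
    Finset.card_eq_sum_card_fiberwise (f := Prod.fst) (fun p _ => Finset.mem_univ p.1)]
  calc V.toFinset.card * r = ∑ _i ∈ V.toFinset, r := by rw [Finset.sum_const, smul_eq_mul]
    _ ≤ ∑ i ∈ V.toFinset, (T.toFinset.filter (·.1 = i)).card :=
        Finset.sum_le_sum fun i hi => fiber i ▸ h i (Set.mem_toFinset.1 hi)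
    _ ≤ ∑ i, (T.toFinset.filter (·.1 = i)).card :=
        Finset.sum_le_sum_of_subset (Finset.subset_univ _)

section Semidirect

variable {X₁ X₂ : Type} {S₁ : SpanoidOn X₁} {S₂ : SpanoidOn X₂}

lemma prod_univ_mem_semidirect {A : Set X₁} {i : X₁} (hi : i ∈ sSpan S₁ A) (j : X₂) :
    (A ×ˢ Set.univ, (i, j)) ∈ semidirect S₁ S₂ :=
  Or.inl ⟨A, i, j, hi, rfl⟩

lemma singleton_prod_mem_semidirect {B : Set X₂} {j : X₂} (hj : j ∈ sSpan S₂ B) (i : X₁) :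
    ({i} ×ˢ B, (i, j)) ∈ semidirect S₁ S₂ :=
  Or.inr ⟨B, i, j, hj, rfl⟩

lemma sSpan_preimage_mk_subset (U : Set (X₁ × X₂)) (i : X₁) :
    sSpan S₂ (Prod.mk i ⁻¹' sSpan (semidirect S₁ S₂) U) ⊆
      Prod.mk i ⁻¹' sSpan (semidirect S₁ S₂) U := by
  refine sSpan_subset_of_rule_closed S₂ subset_rfl fun p hp hsub => ?_
  have hrule := singleton_prod_mem_semidirect (S₁ := S₁)
    (mem_sSpan_of_rule S₂ hp (subset_sSpan S₂ _)) i
  refine mem_sSpan_of_rule _ hrule ?_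
  rintro ⟨a, b⟩ ⟨rfl, hb⟩
  exact hsub hb

lemma sSpan_setOf_forall_mk_mem_subset (U : Set (X₁ × X₂)) :
    sSpan S₁ {i | ∀ j, (i, j) ∈ sSpan (semidirect S₁ S₂) U} ⊆
      {i | ∀ j, (i, j) ∈ sSpan (semidirect S₁ S₂) U} := by
  refine sSpan_subset_of_rule_closed S₁ subset_rfl fun p hp hsub j => ?_
  have hrule := prod_univ_mem_semidirect (S₂ := S₂)
    (mem_sSpan_of_rule S₁ hp (subset_sSpan S₁ _)) j
  refine mem_sSpan_of_rule _ hrule ?_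
  rintro ⟨a, b⟩ ⟨ha, -⟩
  exact hsub ha b

lemma sSpan_semidirect_prod_eq_univ {T₁ : Set X₁} {T₂ : Set X₂}
    (h₁ : sSpan S₁ T₁ = Set.univ) (h₂ : sSpan S₂ T₂ = Set.univ) :
    sSpan (semidirect S₁ S₂) (T₁ ×ˢ T₂) = Set.univ := by
  set U := sSpan (semidirect S₁ S₂) (T₁ ×ˢ T₂)
  have rows_full : T₁ ⊆ {i | ∀ j, (i, j) ∈ U} := by
    intro i hi j
    have row : T₂ ⊆ Prod.mk i ⁻¹' U := fun b hb => subset_sSpan _ _ (Set.mk_mem_prod hi hb)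
    exact sSpan_preimage_mk_subset _ i
      (sSpan_subset_sSpan (row.trans (subset_sSpan S₂ _)) (h₂ ▸ Set.mem_univ j))
  refine Set.eq_univ_of_forall fun ⟨i, j⟩ => ?_
  have hi : i ∈ sSpan S₁ {i | ∀ j, (i, j) ∈ U} :=
    sSpan_subset_sSpan (rows_full.trans (subset_sSpan S₁ _)) (h₁ ▸ Set.mem_univ i)
  exact sSpan_setOf_forall_mk_mem_subset _ hi j

variable (S₂) in
def spanningRows (T : Set (X₁ × X₂)) : Set X₁ :=
  {i | sSpan S₂ (Prod.mk i ⁻¹' T) = Set.univ}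

lemma sSpan_spanningRows_eq_univ {T : Set (X₁ × X₂)}
    (hT : sSpan (semidirect S₁ S₂) T = Set.univ) :
    sSpan S₁ (spanningRows S₂ T) = Set.univ := by
  set W := sSpan S₁ (spanningRows S₂ T)
  set Z : Set (X₁ × X₂) := {p | p.1 ∈ W ∨ p.2 ∈ sSpan S₂ (Prod.mk p.1 ⁻¹' T)}
  have mem_of_row {a : X₁} (ha : ∀ j, (a, j) ∈ Z) : a ∈ W := by
    by_contra haW
    refine haW (subset_sSpan S₁ _ (Set.eq_univ_of_forall fun j => ?_))
    exact (ha j).resolve_left haW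
  have hZ : sSpan (semidirect S₁ S₂) T ⊆ Z := by
    refine sSpan_subset_of_rule_closed _ (fun p hp => Or.inr (subset_sSpan S₂ _ hp)) ?_
    rintro _ (⟨A, i, j, hi, rfl⟩ | ⟨B, i, j, hj, rfl⟩) hsub
    · exact Or.inl <|
        sSpan_subset_sSpan (fun a ha => mem_of_row fun b => hsub ⟨ha, trivial⟩) hi
    · refine or_iff_not_imp_left.2 fun hiW => sSpan_subset_sSpan (fun b hb => ?_) hj
      exact (hsub (Set.mk_mem_prod rfl hb)).resolve_left hiW
  exact Set.eq_univ_of_forall fun a => mem_of_row fun j => hZ (hT ▸ Set.mem_univ _)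

end Semidirect

/-- rank is multiplicative under semi-direct product. -/
theorem rank_semidirect_mul {X₁ X₂ : Type} [Fintype X₁] [Fintype X₂]
    (S₁ : SpanoidOn X₁) (S₂ : SpanoidOn X₂) :
    sRank (semidirect S₁ S₂) = sRank S₁ * sRank S₂ := by
  obtain ⟨T₁, hT₁card, hT₁⟩ := exists_ncard_eq_sRank S₁
  obtain ⟨T₂, hT₂card, hT₂⟩ := exists_ncard_eq_sRank S₂
  obtain ⟨T, hTcard, hT⟩ := exists_ncard_eq_sRank (semidirect S₁ S₂)
  apply le_antisymm
  · calc sRank (semidirect S₁ S₂) ≤ (T₁ ×ˢ T₂).ncard :=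
          sRank_le_ncard _ (sSpan_semidirect_prod_eq_univ hT₁ hT₂)
      _ = sRank S₁ * sRank S₂ := by rw [Set.ncard_prod, hT₁card, hT₂card]
  · calc sRank S₁ * sRank S₂ ≤ (spanningRows S₂ T).ncard * sRank S₂ :=
          Nat.mul_le_mul_right _ (sRank_le_ncard S₁ (sSpan_spanningRows_eq_univ hT))
      _ ≤ T.ncard :=
          ncard_mul_le_ncard_of_le_ncard_preimage_mk fun i hi => sRank_le_ncard S₂ hi
      _ = sRank (semidirect S₁ S₂) := hTcard
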